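/- For every real number p with 0 < p < 1/2 there exists a finite constant C(p), depending only on p, such that for every integer n ≥ C(p) and every function f : V(S_n) → ℝ one has Var_p(M_{S_n} f) ≤ (1 − 1/n) · Var_p f; since equality holds for f = δ_{a_2}, the best constant C_{S_n,p} := sup{ Var_p(M_{S_n} f)/Var_p f : Var_p f > 0 } equals 1 − 1/n for all n ≥ C(p). -/

import Mathlib

open scoped Classical

/-- The ball of radius `r` around `e` in the graph metric of `G`
(only vertices reachable from `e` are at finite distance). -/
noncomputable def gball {V : Type*} [Fintype V] (G : SimpleGraph V) (e : V) (r : ℕ) :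
    Finset V :=
  Finset.univ.filter fun m => G.Reachable e m ∧ G.dist e m ≤ r

/-- The centered Hardy–Littlewood maximal function on a finite graph. -/
noncomputable def mxHL {V : Type*} [Fintype V] (G : SimpleGraph V) (f : V → ℝ) (e : V) : ℝ :=
  ⨆ r : ℕ, (1 / ((gball G e r).card : ℝ)) * ∑ m ∈ gball G e r, |f m|

/-- The fractional centered Hardy–Littlewood maximal function on a finite graph. -/
noncomputable def mxFr {V : Type*} [Fintype V] (G : SimpleGraph V) (α : ℝ) (f : V → ℝ)
    (e : V) : ℝ :=
  ⨆ r : ℕ, ((gball G e r).card : ℝ) ^ (α - 1) * ∑ m ∈ gball G e r, |f m|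

/-- The `p`-variation of `f : V → ℝ` with respect to the graph `G`
(vertices at distance `1` are exactly the adjacent ones). -/
noncomputable def vp {V : Type*} [Fintype V] (G : SimpleGraph V) (p : ℝ) (f : V → ℝ) : ℝ :=
  ((1 / 2) * ∑ v : V, ∑ w : V, if G.Adj v w then |f v - f w| ^ p else 0) ^ (1 / p)

/-- The star graph on `Fin n`, with center the vertex with value `0`. -/
def starG (n : ℕ) : SimpleGraph (Fin n) where
  Adj v w := v ≠ w ∧ (v.val = 0 ∨ w.val = 0)
  symm := ⟨fun _ _ h => ⟨h.1.symm, h.2.symm⟩⟩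
  loopless := ⟨fun _ h => h.1 rfl⟩

/-- The `ℓ²` norm of a function on a finite vertex set. -/
noncomputable def nrm2 {V : Type*} [Fintype V] (g : V → ℝ) : ℝ :=
  Real.sqrt (∑ v : V, g v ^ 2)

/-!
On the star graph the maximal function is explicit: with `A` the mean of `|f|`,
`M f (a₁) = max |f a₁| A` and `M f (w) = max |f w| ((|f w| + |f a₁|) / 2) A` at a leaf `w`.
Put `d_w = |f w| - |f a₁|`; then `A - |f a₁| = (∑ d_w) / n` and `|d_w| ≤ |f a₁ - f w|`.
Let `T₊` and `T₋` be the total positive and negative parts of the `d_w`. Since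
`1 - (1 - 1/n)^p ≤ 1/n` and, by concavity, the positive leaves carry at most `n^(1-p) T₊^p`,
keeping their gaps unchanged costs at most `n^(-p) T₊^p`; by subadditivity the negative leaves
carry at least `T₋^p`.
If `T₊ ≤ T₋`, the gap of each negative leaf at least halves, which pays as soon as
`n^(-p) + 2^(-p) ≤ (1 - 1/n)^p`, true for large `n` because `2^(-p) < 1`.
If `T₊ > T₋`, negative leaves have no gap and positive ones lose `(T₊ - T₋) / n`. When
`T₊ ≤ 2 T₋` the cost is paid since `(2/n)^p ≤ (1 - 1/n)^p`; when `T₊ ≥ 2 T₋` each gap is at most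
`(1 - 1/n) d_w + (d_w - (T₊ - T₋))₊ / n`, and the second term vanishes for all leaves but one.
Equality holds for `δ_{a₂}`.
-/

open Finset

section

variable {ι : Type*} {p : ℝ}

namespace Real
variable {s : Finset ι} {f : ι → ℝ}

lemma rpow_sum_le_sum_rpow (hf : ∀ i ∈ s, 0 ≤ f i) (hp₀ : 0 < p) (hp₁ : p ≤ 1) :
    (∑ i ∈ s, f i) ^ p ≤ ∑ i ∈ s, f i ^ p := by
  induction s using Finset.induction_on with
  | empty => simp [zero_rpow hp₀.ne']
  | insert a s ha ih =>
    rw [sum_insert ha, sum_insert ha]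
    have hs : ∀ i ∈ s, 0 ≤ f i := fun i hi => hf i (mem_insert_of_mem hi)
    calc (f a + ∑ i ∈ s, f i) ^ p ≤ f a ^ p + (∑ i ∈ s, f i) ^ p :=
          rpow_add_le_add_rpow (hf a (mem_insert_self a s)) (sum_nonneg hs) hp₀.le hp₁
      _ ≤ f a ^ p + ∑ i ∈ s, f i ^ p := by gcongr; exact ih hs

lemma sum_rpow_le_card_rpow_mul_rpow_sum (hf : ∀ i ∈ s, 0 ≤ f i) (hp₀ : 0 ≤ p) (hp₁ : p ≤ 1) :
    ∑ i ∈ s, f i ^ p ≤ (#s : ℝ) ^ (1 - p) * (∑ i ∈ s, f i) ^ p := by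
  rcases s.eq_empty_or_nonempty with rfl | hs
  · simp only [sum_empty, card_empty, Nat.cast_zero]
    positivity
  have hk : (0 : ℝ) < #s := by exact_mod_cast hs.card_pos
  have jensen := (concaveOn_rpow hp₀ hp₁).le_map_sum (t := s) (w := fun _ => (#s : ℝ)⁻¹)
    (p := f) (fun _ _ => by positivity) (by simp [hk.ne']) hf
  simp only [smul_eq_mul, ← mul_sum, mul_rpow (inv_nonneg.2 hk.le) (sum_nonneg hf),
    inv_rpow hk.le] at jensen
  calc ∑ i ∈ s, f i ^ p = #s * ((#s : ℝ)⁻¹ * ∑ i ∈ s, f i ^ p) := by field_simp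
    _ ≤ #s * (((#s : ℝ) ^ p)⁻¹ * (∑ i ∈ s, f i) ^ p) := by gcongr
    _ = (#s : ℝ) ^ (1 - p) * (∑ i ∈ s, f i) ^ p := by
        rw [rpow_sub hk, rpow_one]
        ring

end Real

lemma sum_rpow_max_sub_le {s : Finset ι} {d : ι → ℝ} {D t : ℝ} (hd : ∀ i ∈ s, 0 ≤ d i)
    (hsum : ∑ i ∈ s, d i = D + t) (ht : 0 ≤ t) (htD : t ≤ D) (hp : 0 < p) :
    ∑ i ∈ s, max (d i - D) 0 ^ p ≤ t ^ p := by
  by_cases hbig : ∃ i ∈ s, D < d i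
  · obtain ⟨i, hi, hDi⟩ := hbig
    have hle_sum : ∀ j ∈ s, j ≠ i → d i + d j ≤ D + t := fun j hj hji => hsum ▸
      (sum_pair hji.symm).symm.le.trans (sum_le_sum_of_subset_of_nonneg
        (insert_subset hi (singleton_subset_iff.2 hj)) fun k hk _ => hd k hk)
    rw [sum_eq_single_of_mem i hi fun j hj hji => by
      rw [max_eq_right (by linarith [hle_sum j hj hji]), Real.zero_rpow hp.ne']]
    have : d i ≤ D + t := hsum ▸ single_le_sum hd hi
    exact Real.rpow_le_rpow (le_max_right _ _) (max_le (by linarith) ht) hp.le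
  · simp only [not_exists, not_and, not_lt] at hbig
    rw [sum_eq_zero fun i hi => by
      rw [max_eq_right (by linarith [hbig i hi]), Real.zero_rpow hp.ne']]
    positivity

section
variable {L S : Finset ι} {u v : ι → ℝ} {n : ℝ}

lemma one_sub_rpow_mul_sum_rpow_le (hu : ∀ i ∈ L, 0 ≤ u i) (hL : (#L : ℝ) ≤ n) (hn : 1 ≤ n)
    (hp₀ : 0 < p) (hp₁ : p ≤ 1) :
    (1 - (1 - 1 / n) ^ p) * ∑ i ∈ L, u i ^ p ≤ n ^ (-p) * (∑ i ∈ L, u i) ^ p := by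
  have hn₀ : 0 < n := by linarith
  have hc : 1 - 1 / n ≤ (1 - 1 / n) ^ p :=
    Real.self_le_rpow_of_le_one (by rw [sub_nonneg, div_le_one hn₀]; exact hn)
      (sub_le_self _ (by positivity)) hp₁
  calc (1 - (1 - 1 / n) ^ p) * ∑ i ∈ L, u i ^ p
      ≤ 1 / n * (n ^ (1 - p) * (∑ i ∈ L, u i) ^ p) := by
        refine mul_le_mul (by linarith) ?_ (sum_nonneg fun i hi => by have := hu i hi; positivity)
          (by positivity)
        exact (Real.sum_rpow_le_card_rpow_mul_rpow_sum hu hp₀.le hp₁).trans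
          (mul_le_mul_of_nonneg_right (Real.rpow_le_rpow (by positivity) hL (by linarith))
            (Real.rpow_nonneg (sum_nonneg hu) p))
    _ = n ^ (-p) * (∑ i ∈ L, u i) ^ p := by
        rw [Real.rpow_sub hn₀, Real.rpow_one, Real.rpow_neg hn₀.le]
        field_simp

lemma sum_rpow_add_two_rpow_neg_mul_sum_rpow_le (hu : ∀ i ∈ L, 0 ≤ u i)
    (hv : ∀ i ∈ S, 0 ≤ v i) (hLS : ∑ i ∈ L, u i ≤ ∑ i ∈ S, v i) (hL : (#L : ℝ) ≤ n)
    (hn : 1 ≤ n) (hp₀ : 0 < p) (hp₁ : p ≤ 1)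
    (hcond : n ^ (-p) + 2 ^ (-p) ≤ (1 - 1 / n) ^ p) :
    ∑ i ∈ L, u i ^ p + 2 ^ (-p) * ∑ i ∈ S, v i ^ p
      ≤ (1 - 1 / n) ^ p * (∑ i ∈ L, u i ^ p + ∑ i ∈ S, v i ^ p) := by
  have hV : 0 ≤ ∑ i ∈ S, v i ^ p := sum_nonneg fun i hi => Real.rpow_nonneg (hv i hi) p
  have key : (1 - (1 - 1 / n) ^ p) * ∑ i ∈ L, u i ^ p
      ≤ ((1 - 1 / n) ^ p - 2 ^ (-p)) * ∑ i ∈ S, v i ^ p :=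
    calc (1 - (1 - 1 / n) ^ p) * ∑ i ∈ L, u i ^ p
        ≤ n ^ (-p) * (∑ i ∈ L, u i) ^ p := one_sub_rpow_mul_sum_rpow_le hu hL hn hp₀ hp₁
      _ ≤ n ^ (-p) * ∑ i ∈ S, v i ^ p := by
          gcongr
          exact (Real.rpow_le_rpow (sum_nonneg hu) hLS hp₀.le).trans
            (Real.rpow_sum_le_sum_rpow hv hp₀ hp₁)
      _ ≤ ((1 - 1 / n) ^ p - 2 ^ (-p)) * ∑ i ∈ S, v i ^ p := by
          gcongr
          linarith
  linarith

lemma sum_rpow_le_of_le_two_mul (hu : ∀ i ∈ L, 0 ≤ u i) (hv : ∀ i ∈ S, 0 ≤ v i)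
    (hLS : ∑ i ∈ L, u i ≤ 2 * ∑ i ∈ S, v i) (hL : (#L : ℝ) ≤ n) (hn : 3 ≤ n) (hp₀ : 0 < p)
    (hp₁ : p ≤ 1) :
    ∑ i ∈ L, u i ^ p ≤ (1 - 1 / n) ^ p * (∑ i ∈ L, u i ^ p + ∑ i ∈ S, v i ^ p) := by
  have hn₀ : 0 < n := by linarith
  have hTS : 0 ≤ ∑ i ∈ S, v i := sum_nonneg hv
  have key : (1 - (1 - 1 / n) ^ p) * ∑ i ∈ L, u i ^ p ≤ (1 - 1 / n) ^ p * ∑ i ∈ S, v i ^ p :=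
    calc (1 - (1 - 1 / n) ^ p) * ∑ i ∈ L, u i ^ p ≤ n ^ (-p) * (∑ i ∈ L, u i) ^ p :=
          one_sub_rpow_mul_sum_rpow_le hu hL (by linarith) hp₀ hp₁
      _ ≤ n ^ (-p) * (2 * ∑ i ∈ S, v i) ^ p := by gcongr; exact sum_nonneg hu
      _ = (2 / n) ^ p * (∑ i ∈ S, v i) ^ p := by
          rw [Real.mul_rpow zero_le_two hTS, Real.div_rpow zero_le_two hn₀.le,
            Real.rpow_neg hn₀.le]
          ring
      _ ≤ (1 - 1 / n) ^ p * ∑ i ∈ S, v i ^ p := by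
          have h2n : 2 / n ≤ 1 - 1 / n := by
            rw [le_sub_iff_add_le, ← add_div, div_le_one hn₀]
            linarith
          exact mul_le_mul (Real.rpow_le_rpow (by positivity) h2n hp₀.le)
            (Real.rpow_sum_le_sum_rpow hv hp₀ hp₁) (Real.rpow_nonneg hTS p)
            (Real.rpow_nonneg ((div_nonneg zero_le_two hn₀.le).trans h2n) p)
  linarith

lemma sum_rpow_max_sub_div_le_of_two_mul_le (hu : ∀ i ∈ L, 0 ≤ u i) (hv : ∀ i ∈ S, 0 ≤ v i)
    (hLS : 2 * ∑ i ∈ S, v i ≤ ∑ i ∈ L, u i) (hn : 2 ≤ n) (hp₀ : 0 < p) (hp₁ : p ≤ 1) :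
    ∑ i ∈ L, max (u i - (∑ j ∈ L, u j - ∑ j ∈ S, v j) / n) 0 ^ p
      ≤ (1 - 1 / n) ^ p * (∑ i ∈ L, u i ^ p + ∑ i ∈ S, v i ^ p) := by
  set D := ∑ j ∈ L, u j - ∑ j ∈ S, v j
  set c := 1 - 1 / n with hc
  have hn₀ : 0 < n := by linarith
  have hc₀ : 0 ≤ c := by rw [hc, sub_nonneg, div_le_one hn₀]; linarith
  have hterm : ∀ i ∈ L, max (u i - D / n) 0 ^ p
      ≤ c ^ p * u i ^ p + n ^ (-p) * max (u i - D) 0 ^ p := fun i hi =>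
    calc max (u i - D / n) 0 ^ p ≤ (c * u i + max (u i - D) 0 / n) ^ p := by
          refine Real.rpow_le_rpow (le_max_right _ _) (max_le ?_ (by have := hu i hi; positivity))
            hp₀.le
          have := div_le_div_of_nonneg_right (le_max_left (u i - D) 0) hn₀.le
          linarith [show u i - D / n = c * u i + (u i - D) / n by ring]
      _ ≤ (c * u i) ^ p + (max (u i - D) 0 / n) ^ p :=
          Real.rpow_add_le_add_rpow (mul_nonneg hc₀ (hu i hi)) (by positivity) hp₀.le hp₁
      _ = c ^ p * u i ^ p + n ^ (-p) * max (u i - D) 0 ^ p := by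
          rw [Real.mul_rpow hc₀ (hu i hi), Real.div_rpow (le_max_right _ _) hn₀.le,
            Real.rpow_neg hn₀.le, div_eq_inv_mul]
  have hexcess : ∑ i ∈ L, max (u i - D) 0 ^ p ≤ (∑ i ∈ S, v i) ^ p :=
    sum_rpow_max_sub_le hu (by ring) (sum_nonneg hv) (by linarith) hp₀
  have hnc : n ^ (-p) ≤ c ^ p := by
    rw [Real.rpow_neg hn₀.le, ← Real.inv_rpow hn₀.le]
    gcongr
    rw [hc, le_sub_iff_add_le, ← one_div, ← add_div, div_le_one hn₀]
    linarith
  calc ∑ i ∈ L, max (u i - D / n) 0 ^ p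
      ≤ c ^ p * ∑ i ∈ L, u i ^ p + n ^ (-p) * ∑ i ∈ L, max (u i - D) 0 ^ p := by
        rw [mul_sum, mul_sum, ← sum_add_distrib]
        exact sum_le_sum hterm
    _ ≤ c ^ p * ∑ i ∈ L, u i ^ p + c ^ p * ∑ i ∈ S, v i ^ p := by
        have : 0 ≤ (∑ i ∈ S, v i) ^ p := Real.rpow_nonneg (sum_nonneg hv) p
        grw [hexcess, hnc, Real.rpow_sum_le_sum_rpow hv hp₀ hp₁]
    _ = c ^ p * (∑ i ∈ L, u i ^ p + ∑ i ∈ S, v i ^ p) := by ring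

lemma sum_rpow_max_sub_div_le (hu : ∀ i ∈ L, 0 ≤ u i) (hv : ∀ i ∈ S, 0 ≤ v i)
    (hLS : ∑ i ∈ S, v i < ∑ i ∈ L, u i) (hL : (#L : ℝ) ≤ n) (hn : 3 ≤ n) (hp₀ : 0 < p)
    (hp₁ : p ≤ 1) :
    ∑ i ∈ L, max (u i - (∑ j ∈ L, u j - ∑ j ∈ S, v j) / n) 0 ^ p
      ≤ (1 - 1 / n) ^ p * (∑ i ∈ L, u i ^ p + ∑ i ∈ S, v i ^ p) := by
  rcases le_total (∑ i ∈ L, u i) (2 * ∑ i ∈ S, v i) with hsmall | hlarge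
  · have hshift : 0 ≤ (∑ j ∈ L, u j - ∑ j ∈ S, v j) / n := div_nonneg (by linarith) (by linarith)
    refine le_trans (sum_le_sum fun i hi => ?_)
      (sum_rpow_le_of_le_two_mul hu hv hsmall hL hn hp₀ hp₁)
    exact Real.rpow_le_rpow (le_max_right _ _) (max_le (by linarith) (hu i hi)) hp₀.le
  · exact sum_rpow_max_sub_div_le_of_two_mul_le hu hv hlarge (by linarith) hp₀ hp₁
end

/-- `|M f (a₁) - M f (w)|` on the star graph, after subtracting `|f a₁|` from everything:
`d = |f w| - |f a₁|` and `δ = (mean of |f|) - |f a₁|` (see `leafGap_sub_sub`). -/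
noncomputable def leafGap (d δ : ℝ) : ℝ := |max 0 δ - max d (max (d / 2) δ)|

section
variable {d δ : ℝ}

lemma leafGap_le_neg_div_two (hd : d ≤ 0) : leafGap d δ ≤ -d / 2 := by
  unfold leafGap; grind

lemma leafGap_eq_zero (hd : d ≤ 0) (hδ : 0 ≤ δ) : leafGap d δ = 0 := by
  unfold leafGap; grind

lemma leafGap_eq_self (hd : 0 ≤ d) (hδ : δ ≤ 0) : leafGap d δ = d := by
  unfold leafGap; grind

lemma leafGap_eq_max_sub (hd : 0 ≤ d) (hδ : 0 ≤ δ) : leafGap d δ = max (d - δ) 0 := by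
  unfold leafGap; grind

end

lemma leafGap_sub_sub (x a A : ℝ) :
    leafGap (x - a) (A - a) = |max a A - max x (max ((x + a) / 2) A)| := by
  unfold leafGap
  grind

lemma sum_leafGap_rpow_le {I : Finset ι} {d : ι → ℝ} {n : ℝ} (hI : (#I : ℝ) ≤ n) (hn : 3 ≤ n)
    (hp₀ : 0 < p) (hp₁ : p ≤ 1) (hcond : n ^ (-p) + 2 ^ (-p) ≤ (1 - 1 / n) ^ p) :
    ∑ i ∈ I, leafGap (d i) ((∑ j ∈ I, d j) / n) ^ p ≤ (1 - 1 / n) ^ p * ∑ i ∈ I, |d i| ^ p := by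
  set L := I.filter (0 < d ·)
  set S := I.filter (¬ 0 < d ·)
  have hsplit (F : ι → ℝ) : ∑ i ∈ I, F i = ∑ i ∈ L, F i + ∑ i ∈ S, F i :=
    (sum_filter_add_sum_filter_not I _ F).symm
  have hL : ∀ i ∈ L, 0 < d i := fun i hi => (mem_filter.1 hi).2
  have hS : ∀ i ∈ S, d i ≤ 0 := fun i hi => not_lt.1 (mem_filter.1 hi).2
  have hLn : (#L : ℝ) ≤ n := le_trans (by exact_mod_cast card_filter_le I _) hI
  have hsum : ∑ i ∈ I, d i = ∑ i ∈ L, d i - ∑ i ∈ S, -d i := by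
    rw [hsplit, sum_neg_distrib, sub_neg_eq_add]
  have habs : ∑ i ∈ I, |d i| ^ p = ∑ i ∈ L, d i ^ p + ∑ i ∈ S, (-d i) ^ p := by
    rw [hsplit]
    congr 1 <;> refine sum_congr rfl fun i hi => ?_
    · rw [abs_of_pos (hL i hi)]
    · rw [abs_of_nonpos (hS i hi)]
  have hLnn : ∀ i ∈ L, 0 ≤ d i := fun i hi => (hL i hi).le
  have hSnn : ∀ i ∈ S, 0 ≤ -d i := fun i hi => neg_nonneg.2 (hS i hi)
  have hn₀ : 0 < n := by linarith
  rw [habs, hsplit]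
  rcases le_or_gt (∑ j ∈ I, d j) 0 with hδ | hδ
  · have hδ' : (∑ j ∈ I, d j) / n ≤ 0 := div_nonpos_of_nonpos_of_nonneg hδ hn₀.le
    refine le_trans ?_ (sum_rpow_add_two_rpow_neg_mul_sum_rpow_le hLnn hSnn
      (by linarith) hLn (by linarith) hp₀ hp₁ hcond)
    rw [mul_sum]
    refine add_le_add (le_of_eq (sum_congr rfl fun i hi => ?_)) (sum_le_sum fun i hi => ?_)
    · rw [leafGap_eq_self (hLnn i hi) hδ']
    · calc leafGap (d i) _ ^ p ≤ (-d i / 2) ^ p :=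
            Real.rpow_le_rpow (abs_nonneg _) (leafGap_le_neg_div_two (hS i hi)) hp₀.le
        _ = 2 ^ (-p) * (-d i) ^ p := by
            rw [Real.div_rpow (hSnn i hi) zero_le_two, Real.rpow_neg zero_le_two, div_eq_inv_mul]
  · have hδ' : 0 ≤ (∑ j ∈ I, d j) / n := by positivity
    refine le_trans (le_of_eq ?_) (sum_rpow_max_sub_div_le hLnn hSnn (by linarith) hLn hn hp₀ hp₁)
    rw [← hsum, sum_eq_zero (s := S) fun i hi => by
      rw [leafGap_eq_zero (hS i hi) hδ', Real.zero_rpow hp₀.ne'], add_zero]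
    exact sum_congr rfl fun i hi => by rw [leafGap_eq_max_sub (hLnn i hi) hδ']

lemma gball_zero {V : Type*} [Fintype V] (G : SimpleGraph V) (e : V) : gball G e 0 = {e} := by
  ext m
  simp only [gball, mem_filter, mem_univ, true_and, mem_singleton, Nat.le_zero]
  exact ⟨fun ⟨hr, hd⟩ => (hr.dist_eq_zero_iff.1 hd).symm, by rintro rfl; simp⟩

lemma gball_eq_univ {V : Type*} [Fintype V] {G : SimpleGraph V} (hG : G.Connected) {e : V}
    {r : ℕ} (hr : ∀ m, G.dist e m ≤ r) : gball G e r = univ := by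
  ext m
  simpa [gball] using ⟨hG e m, hr m⟩

lemma Fin.one_div_card_univ_mul_sum {n : ℕ} (g : Fin n → ℝ) :
    1 / (#(univ : Finset (Fin n)) : ℝ) * ∑ m, g m = (∑ m, g m) / n := by
  rw [card_univ, Fintype.card_fin, one_div_mul_eq_div]

namespace starG
variable {n : ℕ} [NeZero n]

lemma adj_iff {v w : Fin n} : (starG n).Adj v w ↔ v ≠ w ∧ (v = 0 ∨ w = 0) := by
  show v ≠ w ∧ (v.val = 0 ∨ w.val = 0) ↔ _
  simp only [Fin.val_eq_zero_iff]

lemma connected : (starG n).Connected := by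
  refine SimpleGraph.Connected.mk fun v w => ?_
  have h (u : Fin n) : (starG n).Reachable 0 u := by
    rcases eq_or_ne u 0 with rfl | hu
    · rfl
    · exact (adj_iff.2 ⟨hu.symm, .inl rfl⟩).reachable
  exact (h v).symm.trans (h w)

lemma dist_zero_le_one (w : Fin n) : (starG n).dist 0 w ≤ 1 := by
  rcases eq_or_ne w 0 with rfl | hw
  · simp
  · exact (SimpleGraph.dist_eq_one_iff_adj.2 (adj_iff.2 ⟨hw.symm, .inl rfl⟩)).le

lemma dist_le_two (v w : Fin n) : (starG n).dist v w ≤ 2 :=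
  calc (starG n).dist v w ≤ (starG n).dist v 0 + (starG n).dist 0 w := connected.dist_triangle
    _ ≤ 1 + 1 := add_le_add (SimpleGraph.dist_comm.trans_le (dist_zero_le_one v))
        (dist_zero_le_one w)

lemma gball_zero_of_one_le {r : ℕ} (hr : 1 ≤ r) : gball (starG n) 0 r = univ :=
  gball_eq_univ connected fun m => (dist_zero_le_one m).trans hr

lemma gball_of_two_le (e : Fin n) {r : ℕ} (hr : 2 ≤ r) : gball (starG n) e r = univ :=
  gball_eq_univ connected fun m => (dist_le_two e m).trans hr

lemma gball_one {e : Fin n} (he : e ≠ 0) : gball (starG n) e 1 = {e, 0} := by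
  ext m
  simp only [gball, mem_filter, mem_univ, true_and, mem_insert, mem_singleton]
  rw [and_iff_right (connected e m), Nat.le_one_iff_eq_zero_or_eq_one,
    SimpleGraph.dist_eq_one_iff_adj, (connected e m).dist_eq_zero_iff, adj_iff]
  grind

lemma mxHL_zero (f : Fin n → ℝ) : mxHL (starG n) f 0 = max |f 0| ((∑ m, |f m|) / n) := by
  refine IsGreatest.csSup_eq ⟨?_, ?_⟩
  · rcases max_choice |f 0| ((∑ m, |f m|) / n) with h | h
    · exact ⟨0, by simp [gball_zero, h]⟩
    · exact ⟨1, by dsimp only; rw [gball_zero_of_one_le le_rfl, Fin.one_div_card_univ_mul_sum, h]⟩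
  · rintro _ ⟨r, rfl⟩
    dsimp only
    rcases Nat.eq_zero_or_pos r with rfl | hr
    · simp [gball_zero]
    · simp only [gball_zero_of_one_le hr, Fin.one_div_card_univ_mul_sum, le_max_right]

lemma mxHL_of_ne_zero (f : Fin n → ℝ) {e : Fin n} (he : e ≠ 0) :
    mxHL (starG n) f e = max |f e| (max ((|f e| + |f 0|) / 2) ((∑ m, |f m|) / n)) := by
  have h1 : 1 / ((gball (starG n) e 1).card : ℝ) * ∑ m ∈ gball (starG n) e 1, |f m|
      = (|f e| + |f 0|) / 2 := by
    rw [gball_one he, card_pair he, sum_pair he]; norm_num; ring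
  refine IsGreatest.csSup_eq ⟨?_, ?_⟩
  · rcases max_choice |f e| (max ((|f e| + |f 0|) / 2) ((∑ m, |f m|) / n)) with h | h <;>
      [exact ⟨0, by simp [gball_zero, h]⟩; rw [h]]
    rcases max_choice ((|f e| + |f 0|) / 2) ((∑ m, |f m|) / n) with h | h
    · exact ⟨1, by dsimp only; rw [h1, h]⟩
    · exact ⟨2, by dsimp only; rw [gball_of_two_le e le_rfl, Fin.one_div_card_univ_mul_sum, h]⟩
  · rintro _ ⟨r, rfl⟩
    dsimp only
    match r with
    | 0 => simp [gball_zero]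
    | 1 => rw [h1]; exact (le_max_left _ _).trans (le_max_right _ _)
    | r + 2 =>
      rw [gball_of_two_le e (by omega), Fin.one_div_card_univ_mul_sum]
      exact (le_max_right _ _).trans (le_max_right _ _)

lemma filter_adj_zero : univ.filter ((starG n).Adj 0) = univ.erase 0 := by
  ext w
  simp [adj_iff, eq_comm]

lemma filter_adj_of_ne_zero {v : Fin n} (hv : v ≠ 0) : univ.filter ((starG n).Adj v) = {0} := by
  ext w
  simp only [mem_filter, mem_univ, true_and, mem_singleton, adj_iff]
  grind

lemma vp_eq (f : Fin n → ℝ) :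
    vp (starG n) p f = (∑ w ∈ univ.erase 0, |f 0 - f w| ^ p) ^ (1 / p) := by
  unfold vp
  congr 1
  have hleaf : ∀ v ∈ univ.erase 0,
      ∑ w ∈ univ.filter ((starG n).Adj v), |f v - f w| ^ p = |f 0 - f v| ^ p := fun v hv => by
    rw [filter_adj_of_ne_zero (ne_of_mem_erase hv), sum_singleton, abs_sub_comm]
  simp_rw [← sum_filter]
  rw [← add_sum_erase _ _ (mem_univ 0), filter_adj_zero, sum_congr rfl hleaf]
  ring

lemma vp_mxHL_le (hp₀ : 0 < p) (hp₁ : p ≤ 1) (hn : 3 ≤ n)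
    (hcond : (n : ℝ) ^ (-p) + 2 ^ (-p) ≤ (1 - 1 / n) ^ p) (f : Fin n → ℝ) :
    vp (starG n) p (mxHL (starG n) f) ≤ (1 - 1 / n) * vp (starG n) p f := by
  have hn₀ : (0 : ℝ) < n := Nat.cast_pos.2 (NeZero.pos n)
  have hc : 0 ≤ 1 - 1 / (n : ℝ) := by
    rw [sub_nonneg, div_le_one hn₀]; exact_mod_cast NeZero.one_le
  set I := univ.erase (0 : Fin n)
  set d : Fin n → ℝ := fun w => |f w| - |f 0|
  have hcard : (#I : ℝ) + 1 = n := by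
    rw [card_erase_of_mem (mem_univ _), card_univ, Fintype.card_fin, Nat.cast_pred (NeZero.pos n)]
    ring
  have hmean : (∑ m, |f m|) / n - |f 0| = (∑ w ∈ I, d w) / n := by
    rw [sum_sub_distrib, sum_const, nsmul_eq_mul, ← add_sum_erase _ _ (mem_univ 0)]
    field_simp
    linear_combination |f 0| * hcard
  have hgap : ∀ w ∈ I,
      |mxHL (starG n) f 0 - mxHL (starG n) f w| = leafGap (d w) ((∑ w ∈ I, d w) / n) :=
    fun w hw => by
      rw [mxHL_zero, mxHL_of_ne_zero f (ne_of_mem_erase hw), ← hmean, leafGap_sub_sub]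
  have hsum : ∑ w ∈ I, |mxHL (starG n) f 0 - mxHL (starG n) f w| ^ p
      ≤ (1 - 1 / n) ^ p * ∑ w ∈ I, |f 0 - f w| ^ p := by
    rw [sum_congr rfl fun w hw => by rw [hgap w hw]]
    refine (sum_leafGap_rpow_le (by linarith) (by exact_mod_cast hn) hp₀ hp₁ hcond).trans
      (mul_le_mul_of_nonneg_left (sum_le_sum fun w _ => ?_) (by positivity))
    exact Real.rpow_le_rpow (abs_nonneg _)
      ((abs_abs_sub_abs_le_abs_sub (f w) (f 0)).trans_eq (abs_sub_comm _ _)) hp₀.le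
  rw [vp_eq, vp_eq]
  calc (∑ w ∈ I, |mxHL (starG n) f 0 - mxHL (starG n) f w| ^ p) ^ (1 / p)
      ≤ ((1 - 1 / n) ^ p * ∑ w ∈ I, |f 0 - f w| ^ p) ^ (1 / p) := by gcongr
    _ = (1 - 1 / n) * (∑ w ∈ I, |f 0 - f w| ^ p) ^ (1 / p) := by
      rw [Real.mul_rpow (by positivity) (by positivity), ← Real.rpow_mul hc,
        mul_one_div_cancel hp₀.ne', Real.rpow_one]

lemma vp_eq_abs_of_eq_center (hp : p ≠ 0) {g : Fin n → ℝ} {e : Fin n} (he : e ≠ 0)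
    (hg : ∀ w, w ≠ 0 → w ≠ e → g w = g 0) : vp (starG n) p g = |g 0 - g e| := by
  rw [vp_eq, sum_eq_single_of_mem e (mem_erase.2 ⟨he, mem_univ e⟩) fun w hw hwe => by
    rw [hg w (ne_of_mem_erase hw) hwe, sub_self, abs_zero, Real.zero_rpow hp],
    one_div, Real.rpow_rpow_inv (abs_nonneg _) hp]

lemma vp_indicator (hp : p ≠ 0) {e : Fin n} (he : e ≠ 0) :
    vp (starG n) p (fun v => if v = e then (1 : ℝ) else 0) = 1 := by
  rw [vp_eq_abs_of_eq_center hp he fun w _ hwe => by simp [hwe, he.symm]]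
  simp [he.symm]

lemma vp_mxHL_indicator (hp : p ≠ 0) {e : Fin n} (he : e ≠ 0) :
    vp (starG n) p (mxHL (starG n) (fun v => if v = e then (1 : ℝ) else 0)) = 1 - 1 / n := by
  set g : Fin n → ℝ := fun v => if v = e then 1 else 0
  have h1 : 1 / (n : ℝ) ≤ 1 := by
    rw [div_le_one (Nat.cast_pos.2 (NeZero.pos n))]; exact_mod_cast NeZero.one_le
  have hsum : ∑ m, |g m| = 1 := by
    simp only [g, apply_ite abs, abs_one, abs_zero, sum_ite_eq', mem_univ, if_true]
  have hM0 : mxHL (starG n) g 0 = 1 / n := by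
    rw [mxHL_zero, hsum]
    simp [g, he.symm]
  have hMe : mxHL (starG n) g e = 1 := by
    rw [mxHL_of_ne_zero _ he, hsum]
    simp only [g, if_pos rfl, if_neg he.symm, abs_one, abs_zero]
    exact max_eq_left (max_le (by norm_num) h1)
  have hMw : ∀ w, w ≠ 0 → w ≠ e → mxHL (starG n) g w = 1 / n := fun w hw hwe => by
    rw [mxHL_of_ne_zero _ hw, hsum]
    simp [g, he.symm, hwe]
  rw [vp_eq_abs_of_eq_center hp he fun w hw hwe => by rw [hMw w hw hwe, hM0], hM0, hMe,
    abs_sub_comm, abs_of_nonneg (by linarith)]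
end starG

lemma eventually_rpow_neg_add_le (hp₀ : 0 < p) (hp₁ : p ≤ 1) :
    ∀ᶠ n : ℕ in Filter.atTop, (n : ℝ) ^ (-p) + 2 ^ (-p) ≤ (1 - 1 / n) ^ p := by
  have hlim : Filter.Tendsto (fun n : ℕ => (n : ℝ) ^ (-p) + 2 ^ (-p) + 1 / n) Filter.atTop
      (nhds (0 + 2 ^ (-p) + 0)) :=
    (((tendsto_rpow_neg_atTop hp₀).comp tendsto_natCast_atTop_atTop).add_const _).add
      tendsto_one_div_atTop_nhds_zero_nat
  have h2 : (2 : ℝ) ^ (-p) < 1 := Real.rpow_lt_one_of_one_lt_of_neg one_lt_two (neg_lt_zero.2 hp₀)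
  filter_upwards [hlim.eventually_lt_const (by simpa using h2), Filter.eventually_ge_atTop 1]
    with n hn hn₁
  have h1n : 1 / (n : ℝ) ≤ 1 := by rw [div_le_one (by positivity)]; exact_mod_cast hn₁
  linarith [Real.self_le_rpow_of_le_one (sub_nonneg.2 h1n) (sub_le_self _ (by positivity)) hp₁]

end

/-- for `0 < p < 1/2` there is a finite constant `C(p)` (here `C + 2`)
such that for every `n ≥ C(p)` the sharp constant for the `p`-variation of the
Hardy–Littlewood maximal operator on the star graph `S_n` is `1 - 1/n`. -/
theorem starGraph_var_sharp_small_p (p : ℝ) (hp0 : 0 < p) (hp1 : p < 1 / 2) :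
    ∃ C : ℕ, ∀ (n : ℕ) (hn : C + 2 ≤ n),
      (∀ f : Fin n → ℝ,
          vp (starG n) p (mxHL (starG n) f) ≤ (1 - 1 / (n : ℝ)) * vp (starG n) p f) ∧
      (0 < vp (starG n) p (fun v => if v = ⟨1, by omega⟩ then (1 : ℝ) else 0) ∧
        vp (starG n) p
            (mxHL (starG n) (fun v => if v = ⟨1, by omega⟩ then (1 : ℝ) else 0)) =
          (1 - 1 / (n : ℝ)) *
            vp (starG n) p (fun v => if v = ⟨1, by omega⟩ then (1 : ℝ) else 0)) ∧
      sSup {c : ℝ | ∃ f : Fin n → ℝ, 0 < vp (starG n) p f ∧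
          c = vp (starG n) p (mxHL (starG n) f) / vp (starG n) p f} =
        1 - 1 / (n : ℝ) := by
  obtain ⟨C, hC⟩ := (eventually_rpow_neg_add_le hp0 (by linarith)).and
    (Filter.eventually_ge_atTop 3) |>.exists_forall_of_atTop
  refine ⟨C, fun n hn => ?_⟩
  have : NeZero n := ⟨by omega⟩
  obtain ⟨hcond, hn3⟩ := hC n (by omega)
  have he : (⟨1, by omega⟩ : Fin n) ≠ 0 := Fin.ne_of_val_ne one_ne_zero
  have hbound := starG.vp_mxHL_le hp0 (by linarith) hn3 hcond
  have hδ := starG.vp_indicator hp0.ne' he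
  have hMδ := starG.vp_mxHL_indicator hp0.ne' he
  have hδ_pos : 0 < vp (starG n) p (fun v => if v = ⟨1, by omega⟩ then (1 : ℝ) else 0) := by
    rw [hδ]; exact one_pos
  refine ⟨hbound, ⟨hδ_pos, by rw [hMδ, hδ, mul_one]⟩, IsGreatest.csSup_eq ⟨?_, ?_⟩⟩
  · exact ⟨_, hδ_pos, by rw [hMδ, hδ, div_one]⟩
  · rintro _ ⟨f, hf, rfl⟩
    exact (div_le_iff₀ hf).2 (hbound f)
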